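/- For every ℓ ≥ 2 and all s t : ℝ with s > |t|, Matrix.det (L ℓ s t) ≥ (s^2 − t^2) ^ (ℓ / 2 : ℝ) (that is, det L^ℓ(s,t) ≥ (det L^2(s,t))^{ℓ/2}). Equivalently, ∏ j in Finset.range ℓ, (s − t * Real.cos (2 * π * j / ℓ)) ≥ ((s − t) * (s + t)) ^ (ℓ / 2 : ℝ). -/

import Mathlib

open Matrix Real

/-- The cyclic shift matrix `S_ℓ`, with `(S_ℓ)_{j k} = 1` iff `k = j + 1 (mod ℓ)`. -/
noncomputable def cyclicShift (ℓ : ℕ) : Matrix (Fin ℓ) (Fin ℓ) ℝ :=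
  Matrix.of fun j k => if (k : ℕ) = ((j : ℕ) + 1) % ℓ then 1 else 0

/-- The matrix `L^ℓ(s,t) = s I − (t/2)(S_ℓ + S_ℓᵀ)`. -/
noncomputable def cycleLaplacian (ℓ : ℕ) (s t : ℝ) : Matrix (Fin ℓ) (Fin ℓ) ℝ :=
  s • 1 - (t/2) • (cyclicShift ℓ + (cyclicShift ℓ)ᵀ)

open Equiv Polynomial Finset
example (n : ℕ) (f : ℕ → ℂ) : ∏ j ∈ Finset.range n, f j = ((Multiset.range n).map f).prod := by
  exact rfl
lemma prod_root_sub {n : ℕ} (hn : 0 < n) {ζ : ℂ} (h : IsPrimitiveRoot ζ n) (x : ℂ) :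
    ∏ j ∈ Finset.range n, (x - ζ ^ j) = x ^ n - 1 := by
  have hpoly := X_pow_sub_one_eq_prod hn h
  have h2 := congrArg (Polynomial.eval x) hpoly
  simp only [eval_sub, eval_pow, eval_X, eval_one, eval_prod, eval_sub, eval_C] at h2
  have hm : (nthRoots n (1:ℂ)) = (Multiset.range n).map (ζ ^ ·) := by
    simpa using h.nthRoots_eq (one_pow n)
  have h3 : ∏ z ∈ nthRootsFinset n (1:ℂ), (x - z) = ((nthRoots n (1:ℂ)).map (fun z => x - z)).prod := by
    rw [Polynomial.nthRootsFinset, ← Multiset.toFinset_eq (h.nthRoots_one_nodup), Finset.prod_mk]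
  rw [h2, h3, hm, Multiset.map_map]
  rfl

lemma mod_helper (n m : ℕ) (hm : m < n + 2) : (m + 1) % (n+2) = if m = n + 1 then 0 else m + 1 := by
  rcases Nat.lt_or_ge (m+1) (n+2) with h | h
  · rw [Nat.mod_eq_of_lt h]; have : m ≠ n+1 := by omega
    simp [this]
  · have : m = n + 1 := by omega
    subst this
    simp [Nat.mod_self]

lemma det_smul_one_sub_cyclicShift (n : ℕ) (x : ℝ) :
    (x • (1 : Matrix (Fin (n+2)) (Fin (n+2)) ℝ) - cyclicShift (n+2)).det
      = x ^ (n+2) - 1 := by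
  set M : Matrix (Fin (n+2)) (Fin (n+2)) ℝ := x • 1 - cyclicShift (n+2) with hM
  have hent : ∀ j k : Fin (n+2), M j k =
      (if j = k then x else 0) - (if (k : ℕ) = ((j : ℕ) + 1) % (n+2) then 1 else 0) := by
    intro j k
    simp [hM, cyclicShift, Matrix.one_apply, Matrix.sub_apply, Matrix.smul_apply,
      smul_eq_mul, mul_ite, mul_one, mul_zero]
  rw [Matrix.det_succ_column_zero, Fin.sum_univ_succ]
  have hA : (M.submatrix (Fin.succAbove 0) Fin.succ).det = x ^ (n+1) := by
    rw [Matrix.det_of_upperTriangular]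
    · calc ∏ i : Fin (n+1), M.submatrix (Fin.succAbove 0) Fin.succ i i
          = ∏ i : Fin (n+1), x := by
            apply Finset.prod_congr rfl
            intro i _
            rw [Matrix.submatrix_apply, Fin.succAbove_zero, hent]
            have hne : ¬ ((i:ℕ) + 1 = ((i:ℕ) + 1 + 1) % (n+2)) := by
              rw [mod_helper n ((i:ℕ)+1) (by omega)]
              split <;> omega
            simp [hne]
      _ = x ^ (n+1) := by simp
    · intro i j hij
      rw [Matrix.submatrix_apply, Fin.succAbove_zero, hent]
      have hij' : (j : ℕ) < (i : ℕ) := hij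
      have h1 : ¬ ((i.succ : Fin (n+2)) = j.succ) := by
        simp only [Fin.ext_iff, Fin.val_succ]; omega
      have h2 : ¬ ((j:ℕ) + 1 = ((i:ℕ) + 1 + 1) % (n+2)) := by
        rw [mod_helper n ((i:ℕ)+1) (by omega)]
        split <;> omega
      simp [h1, h2]
  have hB : (M.submatrix (Fin.succAbove (Fin.last (n+1))) Fin.succ).det = (-1) ^ (n+1) := by
    rw [Fin.succAbove_last, Matrix.det_of_lowerTriangular]
    · calc ∏ i : Fin (n+1), M.submatrix Fin.castSucc Fin.succ i i
          = ∏ i : Fin (n+1), (-1 : ℝ) := by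
            apply Finset.prod_congr rfl
            intro i _
            rw [Matrix.submatrix_apply, hent]
            have h1 : ¬ ((i.castSucc : Fin (n+2)) = i.succ) := by
              simp only [Fin.ext_iff, Fin.coe_castSucc, Fin.val_succ]; omega
            have h2 : ((i.succ : Fin (n+2)) : ℕ) = (((i.castSucc : Fin (n+2)) : ℕ) + 1) % (n+2) := by
              simp only [Fin.coe_castSucc, Fin.val_succ]
              rw [Nat.mod_eq_of_lt (by have := i.isLt; omega)]
            rw [if_neg h1, if_pos h2]
            norm_num
      _ = (-1) ^ (n+1) := by simp
    · intro i j hij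
      rw [Matrix.submatrix_apply, hent]
      have hij' : (i : ℕ) < (j : ℕ) := hij
      have h1 : ¬ ((i.castSucc : Fin (n+2)) = j.succ) := by
        simp only [Fin.ext_iff, Fin.coe_castSucc, Fin.val_succ]; omega
      have h2' : ¬ ((j.succ : Fin (n+2)) : ℕ) = (((i.castSucc : Fin (n+2)) : ℕ) + 1) % (n+2) := by
        simp only [Fin.coe_castSucc, Fin.val_succ]
        rw [Nat.mod_eq_of_lt (by have := i.isLt; omega)]
        omega
      rw [if_neg h1, if_neg h2']
      norm_num
  -- now the main sum
  have hM00 : M 0 0 = x := by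
    rw [hent]
    have : ¬ ((0:ℕ) = (0 + 1) % (n+2)) := by rw [Nat.mod_eq_of_lt (by omega)]; omega
    simp [this]
  have htail : ∀ i : Fin (n+1), i ≠ Fin.last n →
      M i.succ 0 = 0 := by
    intro i hi
    rw [hent]
    have h1 : ¬ ((i.succ : Fin (n+2)) = 0) := by
      simp only [Fin.ext_iff, Fin.val_succ, Fin.val_zero]; omega
    have hlt : (i : ℕ) < n := by
      have := i.isLt
      rcases Nat.lt_or_ge (i:ℕ) n with h | h
      · exact h
      · exfalso; apply hi; apply Fin.ext; simp; omega
    have h2 : ¬ ((0:ℕ) = ((i:ℕ) + 1 + 1) % (n+2)) := by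
      rw [Nat.mod_eq_of_lt (by omega)]; omega
    simp [h1, h2]
  have hlast : M (Fin.last n).succ 0 = -1 := by
    rw [hent]
    have h1 : ¬ (((Fin.last n).succ : Fin (n+2)) = 0) := by
      simp only [Fin.ext_iff, Fin.val_succ, Fin.val_zero, Fin.val_last]; omega
    have h4 : (((0 : Fin (n+2)) : ℕ) = ((((Fin.last n).succ : Fin (n+2)) : ℕ) + 1) % (n+2)) := by
      simp only [Fin.val_zero, Fin.val_succ, Fin.val_last]
      rw [Nat.mod_self]
    rw [if_neg h1, if_pos h4]
    norm_num
  rw [Finset.sum_eq_single (Fin.last n)]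
  · have hsA : (Fin.succAbove (0 : Fin (n+2))) = (Fin.succ ·) := by
      funext k; exact Fin.succAbove_zero ▸ rfl
    have hlastsucc : (Fin.last n).succ = Fin.last (n+1) := by
      apply Fin.ext; simp
    rw [hM00, hlast, hlastsucc, hB]
    rw [hA]
    simp only [Fin.val_zero, pow_zero, one_mul, Fin.val_last, Fin.val_succ]
    have hsq : ((-1:ℝ)^(n+1))^2 = 1 := by
      rw [← pow_mul]
      exact Even.neg_one_pow ⟨n+1, by ring⟩
    have e2 : (-1:ℝ)^(n+1) * -1 * (-1)^(n+1) = -1 := by nlinarith [hsq]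
    rw [e2]
    have e1 : x * x ^ (n + 1) = x ^ (n + 2) := by ring
    rw [e1]
    ring
  · intro i _ hi
    rw [htail i hi]
    ring
  · intro h
    exact absurd (Finset.mem_univ _) h

lemma cyclicShift_eq_permMatrix (n : ℕ) :
    cyclicShift (n+1) = (finRotate (n+1)).permMatrix ℝ := by
  ext j k
  simp only [cyclicShift, Matrix.of_apply, Equiv.Perm.permMatrix, PEquiv.toMatrix_apply,
    Equiv.toPEquiv_apply, Option.mem_def, Option.some.injEq]
  have : ((finRotate (n+1)) j : ℕ) = ((j:ℕ) + 1) % (n+1) := by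
    rw [finRotate_succ_apply, Fin.add_def]
    congr 1
    simp [Fin.val_one']
  rw [← this]
  have : ((k:ℕ) = ((finRotate (n+1)) j : ℕ)) ↔ ((finRotate (n+1)) j = k) := by
    rw [Fin.ext_iff]; omega
  simp only [this]

lemma transpose_mul_self (n : ℕ) :
    (cyclicShift (n+1))ᵀ * cyclicShift (n+1) = 1 := by
  rw [cyclicShift_eq_permMatrix]
  rw [Equiv.Perm.permMatrix, ← PEquiv.toMatrix_symm, ← PEquiv.toMatrix_trans]
  rw [← Equiv.toPEquiv_symm, ← Equiv.toPEquiv_trans]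
  simp

lemma det_cyclicShift (n : ℕ) : (cyclicShift (n+1)).det = (-1)^n := by
  rw [cyclicShift_eq_permMatrix, Matrix.det_permutation, sign_finRotate]
  simp

lemma det_cycleLaplacian_eq (n : ℕ) (s t a b : ℝ)
    (hab : a * b = 1) (hsum : (t/2) * (a + b) = s) :
    (cycleLaplacian (n+2) s t).det
      = ((t/2)*a)^(n+2) + ((t/2)*b)^(n+2) - 2*(t/2)^(n+2) := by
  set S : Matrix (Fin (n+2)) (Fin (n+2)) ℝ := cyclicShift (n+2) with hS
  have hTS : Sᵀ * S = 1 := transpose_mul_self (n+1)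
  have hfact : cycleLaplacian (n+2) s t
      = (-(t/2)) • (Sᵀ * ((S - a • 1) * (S - b • 1))) := by
    have hexp : Sᵀ * ((S - a • 1) * (S - b • 1)) = S + Sᵀ - (a + b) • 1 := by
      have h1 : (S - a • 1) * (S - b • 1)
          = S * S - b • S - a • S + (a*b) • 1 := by
        simp only [Matrix.sub_mul, Matrix.mul_sub, Matrix.mul_smul, Matrix.smul_mul,
          Matrix.mul_one, Matrix.one_mul, smul_smul]
        module
      rw [h1]
      rw [Matrix.mul_add, Matrix.mul_sub, Matrix.mul_sub, Matrix.mul_smul, Matrix.mul_smul,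
        Matrix.mul_smul, ← Matrix.mul_assoc, hTS, Matrix.one_mul, Matrix.mul_one, hab, one_smul]
      module
    rw [hexp, cycleLaplacian]
    rw [smul_sub, smul_add]
    have : (-(t/2)) • ((a+b) • (1 : Matrix (Fin (n+2)) (Fin (n+2)) ℝ)) = (-s) • 1 := by
      rw [smul_smul]
      congr 1
      rw [← hsum]; ring
    rw [this]
    have : (-(t/2)) • (S + Sᵀ) = -((t/2) • (S + Sᵀ)) := by module
    module
  rw [hfact]
  rw [Matrix.det_smul, Matrix.det_mul, Matrix.det_mul, Matrix.det_transpose]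
  have hdS : S.det = (-1:ℝ)^(n+1) := det_cyclicShift (n+1)
  have hda : (S - a • 1).det = (-1:ℝ)^(n+2) * (a^(n+2) - 1) := by
    have : S - a • 1 = (-1 : ℝ) • (a • 1 - S) := by module
    rw [this, Matrix.det_smul, det_smul_one_sub_cyclicShift]
    simp [Fintype.card_fin]
  have hdb : (S - b • 1).det = (-1:ℝ)^(n+2) * (b^(n+2) - 1) := by
    have : S - b • 1 = (-1 : ℝ) • (b • 1 - S) := by module
    rw [this, Matrix.det_smul, det_smul_one_sub_cyclicShift]
    simp [Fintype.card_fin]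
  rw [hdS, hda, hdb]
  simp only [Fintype.card_fin]
  have hu : ((-1:ℝ)^(n+1)) * ((-1:ℝ)^(n+1)) = 1 := by
    rw [← pow_add]; exact Even.neg_one_pow ⟨n+1, by ring⟩
  have h2 : (-1:ℝ)^(n+2) = -((-1:ℝ)^(n+1)) := by rw [pow_succ]; ring
  have hneg : (-(t/2))^(n+2) = -((-1:ℝ)^(n+1)) * (t/2)^(n+2) := by
    rw [neg_pow, h2]
  have hpow : (a*b)^(n+2) = 1 := by rw [hab, one_pow]
  rw [hneg, h2]
  generalize hg : ((-1:ℝ)^(n+1)) = u at hu ⊢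
  linear_combination (-((t/2)^(n+2))) * hpow - ((t/2)^(n+2)*(a^(n+2)-1)*(b^(n+2)-1)*(u*u + 1)) * hu

lemma prod_cos_eq (ℓ : ℕ) (hℓ : 2 ≤ ℓ) (s t a b : ℝ) (hab : a * b = 1)
    (hsum : (t/2) * (a + b) = s) :
    ∏ j ∈ Finset.range ℓ, (s - t * Real.cos (2 * π * j / ℓ))
      = ((t/2)*a)^ℓ + ((t/2)*b)^ℓ - 2*(t/2)^ℓ := by
  have hℓ0 : (ℓ : ℝ) ≠ 0 := by positivity
  set ζ : ℂ := Complex.exp (2 * Real.pi * Complex.I / ℓ) with hζdef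
  have hζ : IsPrimitiveRoot ζ ℓ := by
    have := Complex.isPrimitiveRoot_exp ℓ (by omega)
    convert this using 2
  have hζinv : IsPrimitiveRoot ζ⁻¹ ℓ := hζ.inv
  have hζ0 : ζ ≠ 0 := Complex.exp_ne_zero _
  -- per-factor identity
  have hfac : ∀ j ∈ Finset.range ℓ, ((s - t * Real.cos (2 * π * j / ℓ) : ℝ) : ℂ)
      = ((t*b/2 : ℝ) : ℂ) * (((a:ℝ):ℂ) - ζ ^ j) * (((a:ℝ):ℂ) - (ζ⁻¹) ^ j) := by
    intro j _
    have hzj : ζ ^ j = Complex.exp (((2 * π * j / ℓ : ℝ) : ℂ) * Complex.I) := by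
      rw [hζdef, ← Complex.exp_nat_mul]
      congr 1
      push_cast
      ring
    have hzj' : (ζ⁻¹) ^ j = Complex.exp (-(((2 * π * j / ℓ : ℝ) : ℂ) * Complex.I)) := by
      rw [inv_pow, hzj, ← Complex.exp_neg]
    have hcos : ((Real.cos (2 * π * j / ℓ) : ℝ) : ℂ)
        = (ζ ^ j + (ζ⁻¹) ^ j) / 2 := by
      rw [Complex.ofReal_cos, Complex.cos, hzj, hzj']
      ring
    rw [Complex.ofReal_sub, Complex.ofReal_mul, hcos]
    push_cast
    have hEE : ζ ^ j * (ζ⁻¹) ^ j = 1 := by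
      rw [inv_pow, mul_inv_cancel₀ (pow_ne_zero _ hζ0)]
    have habC : (a : ℂ) * (b : ℂ) = 1 := by exact_mod_cast congrArg (Complex.ofReal) hab
    have hsumC : ((t:ℂ)/2) * ((a:ℂ) + (b:ℂ)) = (s:ℂ) := by exact_mod_cast congrArg (Complex.ofReal) hsum
    linear_combination (-1 : ℂ) * hsumC + ((t:ℂ)/2*(ζ^j + (ζ⁻¹)^j) - (t:ℂ)/2*(a:ℂ)) * habC
      + (-((t:ℂ)*(b:ℂ)/2)) * hEE
  -- take the product
  have hprodC : ((∏ j ∈ Finset.range ℓ, (s - t * Real.cos (2 * π * j / ℓ)) : ℝ) : ℂ)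
      = ((t*b/2 : ℝ) : ℂ)^ℓ * (((a:ℝ):ℂ)^ℓ - 1) * (((a:ℝ):ℂ)^ℓ - 1) := by
    rw [Complex.ofReal_prod, Finset.prod_congr rfl hfac]
    rw [Finset.prod_mul_distrib, Finset.prod_mul_distrib, Finset.prod_const,
      prod_root_sub (by omega) hζ, prod_root_sub (by omega) hζinv, Finset.card_range]
  have hreal : ((t*b/2)^ℓ * ((a^ℓ - 1) * (a^ℓ - 1)) : ℝ)
      = ((t/2)*a)^ℓ + ((t/2)*b)^ℓ - 2*(t/2)^ℓ := by
    have h1 : ((t*b/2)*a^2)^ℓ = ((t/2)*a)^ℓ := by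
      congr 1
      linear_combination (t*a/2) * hab
    have h2 : ((t*b/2)*a)^ℓ = (t/2)^ℓ := by
      congr 1
      linear_combination (t/2) * hab
    linear_combination h1 - 2 * h2
  apply Complex.ofReal_injective
  rw [hprodC]
  rw [← hreal]
  push_cast
  ring

lemma rpow_superadd {x y : ℝ} (hx : 0 ≤ x) (hy : 0 ≤ y) {p : ℝ} (hp : 1 ≤ p) :
    x ^ p + y ^ p ≤ (x + y) ^ p := by
  have h := NNReal.add_rpow_le_rpow_add (⟨x, hx⟩ : NNReal) ⟨y, hy⟩ hp
  have h2 := NNReal.coe_le_coe.2 h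
  push_cast [NNReal.coe_rpow] at h2
  exact h2

-- main inequality: for ℓ ≥ 2, A ≥ B > 0, c real with c ≤ sqrt (A*B) in abs,
-- A^ℓ + B^ℓ - 2*c^ℓ ≥ (A-B)^ℓ  where we use c^2 ≤ A*B
lemma pow_eq_sq_rpow (ℓ : ℕ) {x : ℝ} (hx : 0 ≤ x) : (x^2) ^ ((ℓ:ℝ)/2) = x ^ ℓ := by
  rw [← Real.rpow_natCast x 2, ← Real.rpow_mul hx, ← Real.rpow_natCast x ℓ]
  congr 1
  push_cast
  ring

lemma key_ineq (ℓ : ℕ) (hℓ : 2 ≤ ℓ) (A B c : ℝ) (hB : 0 < B) (hBA : B ≤ A)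
    (hc : c^2 = A * B) :
    ((A - B)^2) ^ ((ℓ : ℝ)/2) ≤ A^ℓ + B^ℓ - 2*c^ℓ := by
  set p : ℝ := (ℓ : ℝ)/2 with hp'
  have hp : 1 ≤ p := by
    rw [hp', le_div_iff₀ (by norm_num)]
    exact_mod_cast by exact_mod_cast Nat.cast_le.2 hℓ
  have hA : 0 < A := lt_of_lt_of_le hB hBA
  have hr : 0 ≤ A - B := by linarith
  set u := A ^ p with hu'
  set v := B ^ p with hv'
  set w := (A - B) ^ p with hw'
  have hu0 : 0 ≤ u := rpow_nonneg hA.le p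
  have hv0 : 0 ≤ v := rpow_nonneg hB.le p
  have hw0 : 0 ≤ w := rpow_nonneg hr p
  have hup : u ^ 2 = A ^ ℓ := by
    rw [hu', ← Real.rpow_natCast (A ^ p) 2, ← Real.rpow_mul hA.le]
    rw [hp']
    norm_num
  have hvp : v ^ 2 = B ^ ℓ := by
    rw [hv', ← Real.rpow_natCast (B ^ p) 2, ← Real.rpow_mul hB.le]
    rw [hp']
    norm_num
  have hwp : w ^ 2 = ((A - B)^2) ^ p := by
    rw [hw', ← Real.rpow_natCast ((A-B) ^ p) 2, ← Real.rpow_mul hr, ← Real.rpow_natCast (A-B) 2,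
      ← Real.rpow_mul hr]
    ring_nf
  have huv : u * v = (A*B) ^ p := by
    rw [hu', hv', ← Real.mul_rpow hA.le hB.le]
  have hcl : c ^ ℓ ≤ u * v := by
    rw [huv, ← hc]
    calc c ^ ℓ ≤ |c ^ ℓ| := le_abs_self _
    _ = |c| ^ ℓ := by rw [abs_pow]
    _ = (|c|^2) ^ p := (pow_eq_sq_rpow ℓ (abs_nonneg c)).symm
    _ = (c^2) ^ p := by rw [sq_abs]
  have hsup : w + v ≤ u := by
    have := rpow_superadd hr hB.le hp
    rw [hu']
    calc w + v = (A - B) ^ p + B ^ p := rfl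
    _ ≤ ((A - B) + B) ^ p := rpow_superadd hr hB.le hp
    _ = A ^ p := by ring_nf
  have hfin : w ^ 2 ≤ (u - v)^2 := by
    have h1 : w ≤ u - v := by linarith
    have := mul_self_le_mul_self hw0 h1
    nlinarith
  calc ((A - B)^2) ^ p = w ^ 2 := hwp.symm
  _ ≤ (u - v)^2 := hfin
  _ = u^2 + v^2 - 2*(u*v) := by ring
  _ ≤ A^ℓ + B^ℓ - 2*c^ℓ := by
      rw [hup, hvp]
      nlinarith [hcl]

/-- For `ℓ ≥ 2` and `s > |t|`, `det L^ℓ(s,t) ≥ (det L^2(s,t))^{ℓ/2} = (s²−t²)^{ℓ/2}`. -/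
theorem det_cycleLaplacian_ge (ℓ : ℕ) (hℓ : 2 ≤ ℓ) (s t : ℝ) (hst : s > |t|) :
    Matrix.det (cycleLaplacian ℓ s t) ≥ (s^2 - t^2) ^ ((ℓ : ℝ) / 2) ∧
    ∏ j ∈ Finset.range ℓ, (s - t * Real.cos (2 * Real.pi * j / ℓ))
      ≥ ((s - t) * (s + t)) ^ ((ℓ : ℝ) / 2) := by
  obtain ⟨n, rfl⟩ : ∃ n, ℓ = n + 2 := ⟨ℓ - 2, by omega⟩
  have hs : 0 < s := lt_of_le_of_lt (abs_nonneg t) hst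
  have ht2 : t^2 < s^2 := by nlinarith [sq_abs t, abs_nonneg t]
  have hbase : (s - t) * (s + t) = s^2 - t^2 := by ring
  rw [hbase]
  by_cases ht : t = 0
  · subst ht
    have hdet : (cycleLaplacian (n+2) s 0).det = s ^ (n+2) := by
      have : cycleLaplacian (n+2) s 0 = s • 1 := by
        rw [cycleLaplacian]
        norm_num
      rw [this, Matrix.det_smul, Matrix.det_one, Fintype.card_fin, mul_one]
    have hprod : ∏ j ∈ Finset.range (n+2), (s - 0 * Real.cos (2 * Real.pi * j / ((n+2 : ℕ) : ℝ)))
        = s ^ (n+2) := by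
      simp
    have hrp : (s^2 - 0^2) ^ (((n+2 : ℕ) : ℝ)/2) = s ^ (n+2) := by
      rw [show s^2 - 0^2 = s^2 by ring]
      exact pow_eq_sq_rpow (n+2) hs.le
    constructor
    · rw [hdet, hrp]
    · rw [hprod, hrp]
  · -- t ≠ 0
    set r := Real.sqrt (s^2 - t^2) with hrdef
    have hr2 : r^2 = s^2 - t^2 := Real.sq_sqrt (by nlinarith)
    have hr0 : 0 ≤ r := Real.sqrt_nonneg _
    have htne : t^2 > 0 := by positivity
    have hrs : r < s := by nlinarith
    set A := (s + r)/2 with hAdef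
    set B := (s - r)/2 with hBdef
    have hB : 0 < B := by rw [hBdef]; linarith
    have hBA : B ≤ A := by rw [hAdef, hBdef]; linarith
    have hc : (t/2)^2 = A * B := by
      rw [hAdef, hBdef]
      linear_combination ((1:ℝ)/4) * hr2
    have hab : ((s+r)/t) * ((s-r)/t) = 1 := by
      field_simp
      linear_combination -hr2
    have hsum : (t/2) * ((s+r)/t + (s-r)/t) = s := by
      field_simp
      ring
    have hta : (t/2) * ((s+r)/t) = A := by rw [hAdef]; field_simp
    have htb : (t/2) * ((s-r)/t) = B := by rw [hBdef]; field_simp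
    have key := key_ineq (n+2) (by omega) A B (t/2) hB hBA hc
    have hABr : (A - B)^2 = s^2 - t^2 := by
      rw [hAdef, hBdef, ← hr2]
      ring
    rw [hABr] at key
    have hdet := det_cycleLaplacian_eq n s t ((s+r)/t) ((s-r)/t) hab hsum
    rw [hta, htb] at hdet
    have hprod := prod_cos_eq (n+2) (by omega) s t ((s+r)/t) ((s-r)/t) hab hsum
    rw [hta, htb] at hprod
    constructor
    · rw [hdet]
      calc (s^2 - t^2) ^ (((n+2:ℕ) : ℝ)/2) ≤ A^(n+2) + B^(n+2) - 2*(t/2)^(n+2) := key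
      _ = A^(n+2) + B^(n+2) - 2*(t/2)^(n+2) := rfl
    · rw [hprod]
      exact key
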